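/- Let H : (0,1) → ℝ be defined by H(y) = (1+y²)/(2y(1−y²)), and let y₀ = √(√5 − 2). Then for every y ∈ (0,1) one has H(y) ≥ H(y₀), with equality if and only if y = y₀; moreover H(y₀) = 1/√(10√5 − 22). -/

import Mathlib

/-!
If `y₀ ^ 4 + 4 * y₀ ^ 2 = 1` (the critical-point equation of `H`, whose root in `(0,1)` is
`√(√5 - 2)`), then clearing denominators gives
`H y - H y₀ = 2 (y - y₀)² ((1 + y₀²) y + y₀ (3 + y₀²)) / (2y(1 - y²) · 2y₀(1 - y₀²))`,
a double zero at `y₀` times a factor that is positive on `(0,1)`. The same equation reduces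
`H y₀ ^ 2` to `1 / (10 y₀² - 2)`.
-/

open Real Set

noncomputable def recipInnerRadius (y : ℝ) : ℝ := (1 + y ^ 2) / (2 * y * (1 - y ^ 2))

lemma two_mul_mul_one_sub_sq_pos {y : ℝ} (hy : y ∈ Ioo (0 : ℝ) 1) :
    0 < 2 * y * (1 - y ^ 2) := by
  obtain ⟨h0, h1⟩ := hy
  have : 0 < 1 - y ^ 2 := by nlinarith
  positivity

section Critical

variable {y y₀ : ℝ} (hcrit : y₀ ^ 4 + 4 * y₀ ^ 2 = 1)
include hcrit

lemma recipInnerRadius_sub (hy : 2 * y * (1 - y ^ 2) ≠ 0) (hy₀ : 2 * y₀ * (1 - y₀ ^ 2) ≠ 0) :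
    recipInnerRadius y - recipInnerRadius y₀ =
      2 * (y - y₀) ^ 2 * ((1 + y₀ ^ 2) * y + y₀ * (3 + y₀ ^ 2)) /
        (2 * y * (1 - y ^ 2) * (2 * y₀ * (1 - y₀ ^ 2))) := by
  rw [recipInnerRadius, recipInnerRadius, div_sub_div _ _ hy hy₀]
  congr 1
  linear_combination (2 * y - 2 * y₀) * hcrit

variable (hy : y ∈ Ioo (0 : ℝ) 1) (hy₀ : y₀ ∈ Ioo (0 : ℝ) 1)
include hy hy₀

lemma recipInnerRadius_le_of_crit : recipInnerRadius y₀ ≤ recipInnerRadius y := by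
  have hD := two_mul_mul_one_sub_sq_pos hy
  have hD₀ := two_mul_mul_one_sub_sq_pos hy₀
  have := hy.1
  have := hy₀.1
  rw [← sub_nonneg, recipInnerRadius_sub hcrit hD.ne' hD₀.ne']
  positivity

lemma recipInnerRadius_eq_iff_of_crit : recipInnerRadius y = recipInnerRadius y₀ ↔ y = y₀ := by
  have hD := two_mul_mul_one_sub_sq_pos hy
  have hD₀ := two_mul_mul_one_sub_sq_pos hy₀
  have hfactor : 0 < (1 + y₀ ^ 2) * y + y₀ * (3 + y₀ ^ 2) := by
    have := hy.1; have := hy₀.1; positivity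
  rw [← sub_eq_zero, recipInnerRadius_sub hcrit hD.ne' hD₀.ne', div_eq_zero_iff,
    or_iff_left (by positivity), mul_eq_zero, or_iff_left hfactor.ne', mul_eq_zero,
    or_iff_right two_ne_zero, sq_eq_zero_iff, sub_eq_zero]

end Critical

lemma recipInnerRadius_eq_of_crit {y₀ : ℝ} (hcrit : y₀ ^ 4 + 4 * y₀ ^ 2 = 1)
    (hy₀ : y₀ ∈ Ioo (0 : ℝ) 1) : recipInnerRadius y₀ = 1 / √(10 * y₀ ^ 2 - 2) := by
  have hD₀ := two_mul_mul_one_sub_sq_pos hy₀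
  have hr : 0 < recipInnerRadius y₀ := by unfold recipInnerRadius; positivity
  have h10 : 0 < 10 * y₀ ^ 2 - 2 := by nlinarith [hy₀.1]
  rw [← pow_left_inj₀ hr.le (by positivity) two_ne_zero, div_pow, sq_sqrt h10.le,
    recipInnerRadius, div_pow, div_eq_div_iff (by positivity) h10.ne']
  linear_combination (6 * y₀ ^ 2 + 2) * hcrit

lemma two_lt_sqrt_five : 2 < √5 := by
  rw [lt_sqrt zero_le_two]; norm_num

lemma sqrt_five_lt_three : √5 < 3 := by
  rw [sqrt_lt' three_pos]; norm_num

lemma sqrt_sqrt_five_sub_two_mem_Ioo : √(√5 - 2) ∈ Ioo (0 : ℝ) 1 :=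
  ⟨sqrt_pos.2 (by linarith [two_lt_sqrt_five]),
    (sqrt_lt' one_pos).2 (by linarith [sqrt_five_lt_three])⟩

lemma sq_sqrt_sqrt_five_sub_two : √(√5 - 2) ^ 2 = √5 - 2 :=
  sq_sqrt (by linarith [two_lt_sqrt_five])

lemma sqrt_sqrt_five_sub_two_crit : √(√5 - 2) ^ 4 + 4 * √(√5 - 2) ^ 2 = 1 := by
  rw [show √(√5 - 2) ^ 4 = (√(√5 - 2) ^ 2) ^ 2 by ring, sq_sqrt_sqrt_five_sub_two]
  linear_combination sq_sqrt (show (0 : ℝ) ≤ 5 by norm_num)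

theorem stmt_0 (H : ℝ → ℝ) (hH : ∀ y, H y = (1 + y ^ 2) / (2 * y * (1 - y ^ 2)))
    (y₀ : ℝ) (hy₀ : y₀ = Real.sqrt (Real.sqrt 5 - 2)) :
    (∀ y ∈ Set.Ioo (0 : ℝ) 1, H y₀ ≤ H y ∧ (H y = H y₀ ↔ y = y₀)) ∧
      H y₀ = 1 / Real.sqrt (10 * Real.sqrt 5 - 22) := by
  obtain rfl : H = recipInnerRadius := funext hH
  subst hy₀
  have hcrit := sqrt_sqrt_five_sub_two_crit
  have hmem := sqrt_sqrt_five_sub_two_mem_Ioo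
  refine ⟨fun y hy => ⟨recipInnerRadius_le_of_crit hcrit hy hmem,
    recipInnerRadius_eq_iff_of_crit hcrit hy hmem⟩, ?_⟩
  rw [recipInnerRadius_eq_of_crit hcrit hmem, sq_sqrt_sqrt_five_sub_two]
  congr 2
  ring
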